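/- arXiv:2007.08771 — 2 statements merged into one kernel-verified Lean document; each statement's English description precedes it below -/
import Mathlib

section
/- Let p be a positive integer, and let F_x denote the class of graphs of layered tree-width at most x. If G can be obtained from a graph G' ∈ F_p^{+p} by adding new vertices and new edges incident with new vertices such that each new vertex's neighborhood is contained in a clique of G', then G ∈ F_{p+1}^{+p}. -/
/-!
Keep the deleted set `Z`. The neighbourhood of a new vertex `a` is a clique of the old graph;
a clique of a graph of bounded layered tree-width is finite, so by the Helly property of
subtrees it lies in a single bag `t_a`. Hang a new leaf with bag `{a} ∪ N(a)` at `t_a` and put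
`a` on the layer of one of its neighbours. Each layer then meets the new bag in at most the
`p` old vertices of `N(a)` on it plus `a` itself.
-/

open SimpleGraph

/-- The ℓ-th power of a graph: distinct vertices are adjacent iff their
distance in `G` is at most `ℓ` (using the extended distance, so unreachable
pairs are non-adjacent). -/
def SimpleGraph.pow {V : Type} (G : SimpleGraph V) (ℓ : ℕ) : SimpleGraph V where
  Adj u v := u ≠ v ∧ G.edist u v ≤ ℓ
  symm := by
    constructor
    intro u v h
    exact ⟨h.1.symm, by rw [SimpleGraph.edist_comm]; exact h.2⟩
  loopless := by constructor; intro v h; exact h.1 rfl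

/-- `MonoReach H c u v` : `u` and `v` lie in the same `c`-monochromatic
component of `H` (joined by a walk all of whose vertices get the same color). -/
def MonoReach {V : Type} {α : Type} (H : SimpleGraph V) (c : V → α) : V → V → Prop :=
  Relation.ReflTransGen (fun a b => H.Adj a b ∧ c a = c b)

/-- `N_G^{≤ r}[S]` : vertices joined to `S` by a path of length at most `r`. -/
def ballSet {V : Type} (G : SimpleGraph V) (S : Set V) (r : ℕ) : Set V :=
  {v | ∃ s ∈ S, G.edist s v ≤ r}

/-- Tree-decomposition of `G` with tree `Tg` and bags `bag`. -/
def IsTreeDecomp {V T : Type} (G : SimpleGraph V) (Tg : SimpleGraph T) (bag : T → Set V) : Prop :=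
  Tg.Connected ∧ Tg.IsAcyclic ∧
  (∀ v, ∃ t, v ∈ bag t) ∧
  (∀ u v, G.Adj u v → ∃ t, u ∈ bag t ∧ v ∈ bag t) ∧
  (∀ v, (Tg.induce {t | v ∈ bag t}).Preconnected)

/-- A layering of `G`: every edge joins two consecutive layers. -/
def IsLayering {V : Type} (G : SimpleGraph V) (L : V → ℕ) : Prop :=
  ∀ u v, G.Adj u v → L u ≤ L v + 1 ∧ L v ≤ L u + 1

/-- Layered tree-width at most `w`. -/
def LayeredTreewidthLE (V : Type) (G : SimpleGraph V) (w : ℕ) : Prop :=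
  ∃ (T : Type) (Tg : SimpleGraph T) (bag : T → Set V) (L : V → ℕ),
    IsTreeDecomp G Tg bag ∧ IsLayering G L ∧
    ∀ t i, (bag t ∩ L ⁻¹' {i}).encard ≤ w

namespace SimpleGraph

section

variable {V : Type*} {G : SimpleGraph V}

theorem Walk.IsPath.append_of_support_inter {u v w : V} {p : G.Walk u v} {q : G.Walk v w}
    (hp : p.IsPath) (hq : q.IsPath) (h : ∀ z ∈ p.support, z ∈ q.support → z = v) :
    (p.append q).IsPath := by
  rw [Walk.isPath_def, Walk.support_append, List.nodup_append]
  refine ⟨hp.support_nodup, hq.support_nodup.sublist q.support.tail_sublist, ?_⟩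
  rintro z hz _ hz' rfl
  have hq' := hq.support_nodup
  rw [← q.cons_tail_support, List.nodup_cons] at hq'
  exact hq'.1 (h z hz (List.mem_of_mem_tail hz') ▸ hz')

theorem Preconnected.exists_isPath_of_induce {S : Set V} (hS : (G.induce S).Preconnected)
    {x y : V} (hx : x ∈ S) (hy : y ∈ S) :
    ∃ q : G.Walk x y, q.IsPath ∧ ∀ z ∈ q.support, z ∈ S := by
  classical
  obtain ⟨w⟩ := hS ⟨x, hx⟩ ⟨y, hy⟩
  let w' := w.map (Embedding.induce S).toHom
  refine ⟨w'.bypass, w'.bypass_isPath, fun z hz => ?_⟩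
  have hz' : z ∈ w'.support := w'.support_bypass_subset_support hz
  rw [Walk.support_map] at hz'
  obtain ⟨z', -, rfl⟩ := List.mem_map.mp hz'
  exact z'.2

theorem IsAcyclic.eq_of_isPath (hG : G.IsAcyclic) {x y : V} {p q : G.Walk x y} (hp : p.IsPath)
    (hq : q.IsPath) : p = q :=
  congrArg Subtype.val ((hG.subsingleton_path x y).elim ⟨p, hp⟩ ⟨q, hq⟩)

theorem IsAcyclic.mem_of_preconnected_induce (hG : G.IsAcyclic) {S : Set V}
    (hS : (G.induce S).Preconnected) {x y : V} (hx : x ∈ S) (hy : y ∈ S) {p : G.Walk x y}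
    (hp : p.IsPath) {z : V} (hz : z ∈ p.support) : z ∈ S := by
  obtain ⟨q, hq, hqS⟩ := hS.exists_isPath_of_induce hx hy
  exact hqS z (hG.eq_of_isPath hp hq ▸ hz)

/-- The gate is the vertex of `S` nearest to `t`. -/
theorem IsTree.exists_gate (hG : G.IsTree) {S : Set V} (hS : (G.induce S).Preconnected)
    (hne : S.Nonempty) (t : V) :
    ∃ s ∈ S, ∀ x ∈ S, ∀ p : G.Walk t x, p.IsPath → s ∈ p.support := by
  classical
  set s := Function.argminOn (G.dist t) S hne
  have hs : s ∈ S := Function.argminOn_mem _ _ hne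
  obtain ⟨Q, hQ, hQlen⟩ := hG.connected.exists_path_of_dist t s
  have hQS : ∀ z ∈ Q.support, z ∈ S → z = s := by
    intro z hz hzS
    have hmin : G.dist t s ≤ (Q.takeUntil z hz).length :=
      (Function.argminOn_le _ _ hzS).trans (dist_le _)
    have hsplit := congrArg Walk.length (Q.take_spec hz)
    rw [Walk.length_append] at hsplit
    exact Walk.eq_of_length_eq_zero (by omega : (Q.dropUntil z hz).length = 0)
  refine ⟨s, hs, fun x hx p hp => ?_⟩
  obtain ⟨R, hR, hRS⟩ := hS.exists_isPath_of_induce hs hx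
  have hpath := hQ.append_of_support_inter hR fun z hz hz' => hQS z hz (hRS z hz')
  rw [hG.isAcyclic.eq_of_isPath hp hpath, Walk.mem_support_append_iff]
  exact Or.inl Q.end_mem_support

theorem IsTree.exists_forall_mem_of_inter_nonempty (hG : G.IsTree) {ι : Type*}
    (F : ι → Set V) (hF : ∀ i, (G.induce (F i)).Preconnected) (K : Finset ι)
    (hK : ∀ i ∈ K, ∀ j ∈ K, (F i ∩ F j).Nonempty) : ∃ t, ∀ i ∈ K, t ∈ F i := by
  classical
  induction K using Finset.induction with
  | empty => exact ⟨hG.connected.nonempty.some, by simp⟩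
  | @insert j K _ ih =>
    obtain ⟨t, ht⟩ := ih fun i hi i' hi' =>
      hK i (Finset.mem_insert_of_mem hi) i' (Finset.mem_insert_of_mem hi')
    have hj := Finset.mem_insert_self j K
    obtain ⟨s, hsj, hgate⟩ := hG.exists_gate (hF j) (hK j hj j hj).left t
    refine ⟨s, fun i hi => ?_⟩
    rcases Finset.mem_insert.mp hi with rfl | hiK
    · exact hsj
    · obtain ⟨x, hxi, hxj⟩ := hK i hi j hj
      obtain ⟨p, hp⟩ := (hG.connected.preconnected t x).exists_isPath
      exact hG.isAcyclic.mem_of_preconnected_induce (hF i) (ht i hiK) hxi hp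
        (hgate x hxj p hp)

end

section

variable {T A : Type*} {G : SimpleGraph T} {att : A → T}

def attachLeaves (G : SimpleGraph T) (att : A → T) : SimpleGraph (T ⊕ A) where
  Adj
    | .inl s, .inl t => G.Adj s t
    | .inl t, .inr a | .inr a, .inl t => att a = t
    | .inr _, .inr _ => False
  symm := ⟨by rintro (s | a) (t | b) h <;> first | exact h.symm | exact h⟩
  loopless := ⟨by rintro (t | a) h <;> first | exact G.loopless.irrefl t h | exact h⟩

theorem attachLeaves_induce_preconnected {S : Set (T ⊕ A)}
    (hS : (G.induce (Sum.inl ⁻¹' S)).Preconnected)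
    (hleaf : ∀ a, Sum.inr a ∈ S → Sum.inl (att a) ∈ S) :
    ((G.attachLeaves att).induce S).Preconnected := by
  let f : G.induce (Sum.inl ⁻¹' S) →g (G.attachLeaves att).induce S :=
    ⟨fun t => ⟨.inl t, t.2⟩, fun h => h⟩
  have hroot : ∀ x : S, ∃ t, ((G.attachLeaves att).induce S).Reachable x (f t) := by
    rintro ⟨s | a, hx⟩
    · exact ⟨⟨s, hx⟩, .rfl⟩
    · exact ⟨⟨att a, hleaf a hx⟩, Adj.reachable (show att a = att a from rfl)⟩
  intro x y
  obtain ⟨s, hs⟩ := hroot x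
  obtain ⟨t, ht⟩ := hroot y
  exact hs.trans (((hS s t).map f).trans ht.symm)

theorem Connected.attachLeaves (hG : G.Connected) : (G.attachLeaves att).Connected := by
  have : Nonempty (T ⊕ A) := ⟨.inl hG.nonempty.some⟩
  refine ⟨(induceUnivIso _).preconnected_iff.mp (attachLeaves_induce_preconnected ?_ ?_)⟩
  · exact (induceUnivIso G).preconnected_iff.mpr hG.preconnected
  · exact fun _ _ => Set.mem_univ _

/-- A cycle through a leaf would need two neighbours there; a cycle avoiding the leaves is a
cycle of `G`. -/
theorem IsAcyclic.attachLeaves (hG : G.IsAcyclic) : (G.attachLeaves att).IsAcyclic := by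
  intro v c hc
  by_cases hleaf : ∃ a, Sum.inr a ∈ c.support
  · obtain ⟨a, ha⟩ := hleaf
    have hnbr : (G.attachLeaves att).neighborSet (.inr a) ⊆ {.inl (att a)} := by
      rintro (t | b) h
      · exact congrArg Sum.inl (show att a = t from h).symm
      · exact (h : False).elim
    have := (Set.ncard_le_ncard ((c.toSubgraph.neighborSet_subset _).trans hnbr)).trans_eq
      (Set.ncard_singleton _)
    rw [hc.ncard_neighborSet_toSubgraph_eq_two ha] at this
    omega
  · push Not at hleaf
    have hc_inl : ∀ x ∈ c.support, x ∈ Set.range Sum.inl := by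
      rintro (t | a) hx
      · exact ⟨t, rfl⟩
      · exact (hleaf a hx).elim
    let f : (G.attachLeaves att).induce (Set.range Sum.inl) →g G :=
      ⟨fun x => Sum.elim id att x.1, by rintro ⟨_, s, rfl⟩ ⟨_, t, rfl⟩ h; exact h⟩
    have hf : Function.Injective f := by
      rintro ⟨_, s, rfl⟩ ⟨_, t, rfl⟩ h
      cases (h : s = t)
      rfl
    refine hG.comap f hf (c.induce _ hc_inl) ?_
    rw [← Walk.isCycle_map_iff_of_injective (f := (Embedding.induce _).toHom)
      Subtype.val_injective, Walk.map_induce]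
    exact hc

end

end SimpleGraph

section TreeDecomp

variable {V W T : Type} {G : SimpleGraph V} {H : SimpleGraph W} {Tg : SimpleGraph T}
  {bag : T → Set V}

theorem IsTreeDecomp.exists_bag_superset_of_isClique (htd : IsTreeDecomp G Tg bag)
    {s : Set V} (hs : s.Finite) (hcl : G.IsClique s) : ∃ t, s ⊆ bag t := by
  obtain ⟨hc, ha, hcover, hedge, hsub⟩ := htd
  have hmeet : ∀ u ∈ hs.toFinset, ∀ v ∈ hs.toFinset,
      ({t | u ∈ bag t} ∩ {t | v ∈ bag t}).Nonempty := by
    intro u hu v hv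
    rw [hs.mem_toFinset] at hu hv
    rcases eq_or_ne u v with rfl | huv
    · obtain ⟨t, ht⟩ := hcover u
      exact ⟨t, ht, ht⟩
    · exact hedge u v (hcl hu hv huv)
  obtain ⟨t, ht⟩ := (IsTree.mk hc ha).exists_forall_mem_of_inter_nonempty _ hsub _ hmeet
  exact ⟨t, fun v hv => ht v (hs.mem_toFinset.mpr hv)⟩

/-- A clique meets at most two layers, and a finite part of it lies in a single bag. -/
theorem IsTreeDecomp.finite_of_isClique (htd : IsTreeDecomp G Tg bag) {L : V → ℕ}
    (hL : IsLayering G L) {w : ℕ} (hw : ∀ t i, (bag t ∩ L ⁻¹' {i}).encard ≤ w) {s : Set V}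
    (hs : G.IsClique s) : s.Finite := by
  by_contra hinf
  obtain ⟨s', hs's, hs'fin, hcard⟩ := Set.Infinite.exists_subset_ncard_eq hinf (2 * w + 1)
  obtain ⟨t, ht⟩ := htd.exists_bag_superset_of_isClique hs'fin (hs.subset hs's)
  obtain ⟨u, hu, hmin⟩ := Set.exists_min_image s' L hs'fin
    (Set.nonempty_of_ncard_ne_zero (by omega))
  have hcover : s' ⊆ (bag t ∩ L ⁻¹' {L u}) ∪ (bag t ∩ L ⁻¹' {L u + 1}) := by
    intro v hv
    have hle : L v ≤ L u + 1 := by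
      rcases eq_or_ne v u with rfl | hvu
      · omega
      · exact (hL v u (hs (hs's hv) (hs's hu) hvu)).1
    rcases (by have := hmin v hv; omega : L v = L u ∨ L v = L u + 1) with h | h
    · exact Or.inl ⟨ht hv, h⟩
    · exact Or.inr ⟨ht hv, h⟩
  have hle : s'.encard ≤ w + w :=
    (Set.encard_mono hcover).trans ((Set.encard_union_le _ _).trans (add_le_add (hw _ _) (hw _ _)))
  rw [← hs'fin.cast_ncard_eq, hcard] at hle
  norm_cast at hle
  omega

theorem IsTreeDecomp.comap (f : G →g H) {bag : T → Set W} (htd : IsTreeDecomp H Tg bag) :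
    IsTreeDecomp G Tg fun t => f ⁻¹' bag t := by
  obtain ⟨hc, ha, hcover, hedge, hsub⟩ := htd
  exact ⟨hc, ha, fun v => hcover (f v), fun u v h => hedge _ _ (f.map_adj h), fun v => hsub (f v)⟩

theorem IsLayering.comap (f : G →g H) {L : W → ℕ} (hL : IsLayering H L) :
    IsLayering G (L ∘ f) :=
  fun _ _ h => hL _ _ (f.map_adj h)

end TreeDecomp

theorem LayeredTreewidthLE.comap {V W : Type} {G : SimpleGraph V} {H : SimpleGraph W} {w : ℕ}
    (f : G →g H) (hf : Function.Injective f) (h : LayeredTreewidthLE W H w) :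
    LayeredTreewidthLE V G w := by
  obtain ⟨T, Tg, bag, L, htd, hL, hw⟩ := h
  refine ⟨T, Tg, fun t => f ⁻¹' bag t, L ∘ f, IsTreeDecomp.comap f htd, IsLayering.comap f hL,
    fun t i => ?_⟩
  calc (f ⁻¹' bag t ∩ (L ∘ f) ⁻¹' {i}).encard
      = (f ⁻¹' (bag t ∩ L ⁻¹' {i})).encard := rfl
    _ = (f '' (f ⁻¹' (bag t ∩ L ⁻¹' {i}))).encard := hf.injOn.encard_image.symm
    _ ≤ (bag t ∩ L ⁻¹' {i}).encard := Set.encard_mono (Set.image_preimage_subset _ _)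
    _ ≤ w := hw t i

section AddVertices

variable {V T : Type} {G : SimpleGraph V} {O : Set V}

open Classical in
noncomputable def extendLayering (G : SimpleGraph V) (O : Set V) (L : O → ℕ) (v : V) : ℕ :=
  if h : v ∈ O then L ⟨v, h⟩ else if h' : ∃ u : O, G.Adj v u then L h'.choose else 0

@[simp]
theorem extendLayering_coe (L : O → ℕ) (u : O) : extendLayering G O L u = L u :=
  dif_pos u.2

theorem image_val_inter_extendLayering_preimage (L : O → ℕ) (s : Set O) (i : ℕ) :
    Subtype.val '' s ∩ extendLayering G O L ⁻¹' {i} = Subtype.val '' (s ∩ L ⁻¹' {i}) := by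
  ext v
  simp only [Set.mem_inter_iff, Set.mem_image, Set.mem_preimage, Set.mem_singleton_iff]
  constructor
  · rintro ⟨⟨u, hu, rfl⟩, hi⟩
    exact ⟨u, ⟨hu, by rwa [extendLayering_coe] at hi⟩, rfl⟩
  · rintro ⟨u, ⟨hu, hi⟩, rfl⟩
    exact ⟨⟨u, hu, rfl⟩, by rwa [extendLayering_coe]⟩

theorem isLayering_extendLayering {L : O → ℕ} (hL : IsLayering (G.induce O) L)
    (hnew : ∀ a, a ∉ O → ∀ u, G.Adj a u → u ∈ O)
    (hclique : ∀ a, a ∉ O → G.IsClique (G.neighborSet a)) :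
    IsLayering G (extendLayering G O L) := by
  have hleaf : ∀ a, a ∉ O → ∀ u : O, G.Adj a u →
      extendLayering G O L a ≤ L u + 1 ∧ L u ≤ extendLayering G O L a + 1 := by
    intro a ha u hau
    have hex : ∃ u : O, G.Adj a u := ⟨u, hau⟩
    have hval : extendLayering G O L a = L hex.choose := by
      simp only [extendLayering, dif_neg ha, dif_pos hex]
    rw [hval]
    rcases eq_or_ne hex.choose u with h | h
    · rw [h]
      omega
    · exact hL _ _ (hclique a ha hex.choose_spec hau (Subtype.val_injective.ne h))
  intro v w hvw
  by_cases hv : v ∈ O <;> by_cases hw : w ∈ O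
  · simpa only [← extendLayering_coe (G := G) L ⟨v, hv⟩, ← extendLayering_coe (G := G) L ⟨w, hw⟩]
      using hL ⟨v, hv⟩ ⟨w, hw⟩ hvw
  · simpa only [extendLayering_coe (G := G) L ⟨v, hv⟩, and_comm]
      using hleaf w hw ⟨v, hv⟩ hvw.symm
  · simpa only [extendLayering_coe (G := G) L ⟨w, hw⟩] using hleaf v hv ⟨w, hw⟩ hvw
  · exact absurd (hnew v hv w hvw) hw

def leafBags (G : SimpleGraph V) (O : Set V) (bag : T → Set O) : T ⊕ ↥Oᶜ → Set V :=
  Sum.elim (fun t => Subtype.val '' bag t) fun a => insert a.1 (G.neighborSet a)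

theorem IsTreeDecomp.attachLeaves {Tg : SimpleGraph T} {bag : T → Set O}
    (htd : IsTreeDecomp (G.induce O) Tg bag) (hnew : ∀ a, a ∉ O → ∀ u, G.Adj a u → u ∈ O)
    {att : ↥Oᶜ → T} (hatt : ∀ a : ↥Oᶜ, ∀ u : O, G.Adj a u → u ∈ bag (att a)) :
    IsTreeDecomp G (Tg.attachLeaves att) (leafBags G O bag) := by
  obtain ⟨hc, ha, hcover, hedge, hsub⟩ := htd
  refine ⟨hc.attachLeaves, ha.attachLeaves, fun v => ?_, fun u v huv => ?_, fun v => ?_⟩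
  · by_cases hv : v ∈ O
    · obtain ⟨t, ht⟩ := hcover ⟨v, hv⟩
      exact ⟨.inl t, ⟨v, hv⟩, ht, rfl⟩
    · exact ⟨.inr ⟨v, hv⟩, Set.mem_insert _ _⟩
  · by_cases hu : u ∈ O <;> by_cases hv : v ∈ O
    · obtain ⟨t, hut, hvt⟩ := hedge ⟨u, hu⟩ ⟨v, hv⟩ huv
      exact ⟨.inl t, ⟨_, hut, rfl⟩, ⟨_, hvt, rfl⟩⟩
    · exact ⟨.inr ⟨v, hv⟩, Set.mem_insert_of_mem _ huv.symm, Set.mem_insert _ _⟩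
    · exact ⟨.inr ⟨u, hu⟩, Set.mem_insert _ _, Set.mem_insert_of_mem _ huv⟩
    · exact absurd (hnew u hu v huv) hv
  · by_cases hv : v ∈ O
    · apply attachLeaves_induce_preconnected
      · have hset : Sum.inl ⁻¹' {x | v ∈ leafBags G O bag x} = {t | ⟨v, hv⟩ ∈ bag t} :=
          Set.ext fun t => Subtype.val_injective.mem_set_image (a := ⟨v, hv⟩) (s := bag t)
        rw [hset]
        exact hsub _
      · rintro a (h | h)
        · exact absurd (h ▸ hv) a.2
        · exact ⟨⟨v, hv⟩, hatt a ⟨v, hv⟩ h, rfl⟩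
    · have honly : ∀ x, v ∈ leafBags G O bag x → x = .inr ⟨v, hv⟩ := by
        rintro (t | a) h
        · obtain ⟨u, -, rfl⟩ := h
          exact absurd u.2 hv
        · rcases h with h | h
          · exact congrArg Sum.inr (Subtype.ext h).symm
          · exact absurd (hnew a a.2 v h) hv
      rintro ⟨x, hx⟩ ⟨y, hy⟩
      obtain rfl := (honly x hx).trans (honly y hy).symm
      rfl

end AddVertices

theorem LayeredTreewidthLE.of_isClique_neighborSet {V : Type} {G : SimpleGraph V} {O : Set V}
    {w : ℕ} (h : LayeredTreewidthLE O (G.induce O) w)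
    (hnew : ∀ a, a ∉ O → ∀ u, G.Adj a u → u ∈ O)
    (hclique : ∀ a, a ∉ O → G.IsClique (G.neighborSet a)) :
    LayeredTreewidthLE V G (w + 1) := by
  obtain ⟨T, Tg, bag, L, htd, hL, hw⟩ := h
  have hK : ∀ a : ↥Oᶜ, (G.induce O).IsClique {u | G.Adj a u} := fun a _ hu _ hv huv =>
    hclique a a.2 hu hv (Subtype.val_injective.ne huv)
  choose att hatt using fun a : ↥Oᶜ =>
    htd.exists_bag_superset_of_isClique (htd.finite_of_isClique hL hw (hK a)) (hK a)
  refine ⟨T ⊕ ↥Oᶜ, Tg.attachLeaves att, leafBags G O bag, extendLayering G O L,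
    htd.attachLeaves hnew fun a _ hu => hatt a hu, isLayering_extendLayering hL hnew hclique,
    ?_⟩
  have hval : ∀ s : Set O, (Subtype.val '' s).encard = s.encard := fun _ =>
    Subtype.val_injective.injOn.encard_image
  rintro (t | a) i
  · rw [leafBags, Sum.elim_inl, image_val_inter_extendLayering_preimage, hval]
    exact (hw t i).trans (by norm_cast; omega)
  · have hsub : leafBags G O bag (.inr a) ∩ extendLayering G O L ⁻¹' {i} ⊆
        insert a.1 (Subtype.val '' (bag (att a) ∩ L ⁻¹' {i})) := by
      rw [← image_val_inter_extendLayering_preimage]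
      rintro v ⟨hv | hv, hi⟩
      · exact Or.inl hv
      · exact Or.inr ⟨⟨⟨v, hnew a a.2 v hv⟩, hatt a hv, rfl⟩, hi⟩
    calc _ ≤ _ := Set.encard_mono hsub
      _ ≤ _ := Set.encard_insert_le _ _
      _ ≤ w + 1 := by rw [hval]; gcongr; exact hw _ _
      _ = ((w + 1 : ℕ) : ℕ∞) := by push_cast; rfl

theorem stmt13_general {U : Type} (p : ℕ) (G : SimpleGraph U) (O : Set U)
    (hold : ∃ Z ⊆ O, Z.encard ≤ (p : ℕ∞) ∧
      LayeredTreewidthLE (O \ Z : Set U) (G.induce (O \ Z)) p)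
    (hnew : ∀ a, a ∉ O → ∀ u, G.Adj a u → u ∈ O)
    (hclique : ∀ a, a ∉ O → G.IsClique (G.neighborSet a)) :
    ∃ Z' : Set U, Z'.encard ≤ (p : ℕ∞) ∧
      LayeredTreewidthLE (Z'ᶜ : Set U) (G.induce Z'ᶜ) (p + 1) := by
  obtain ⟨Z, -, hZ, hltw⟩ := hold
  let f : (G.induce Zᶜ).induce {v | v.1 ∈ O} →g G.induce (O \ Z) :=
    ⟨fun v => ⟨v.1.1, v.2, v.1.2⟩, fun h => h⟩
  have hf : Function.Injective f := fun u v h =>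
    Subtype.val_injective (Subtype.val_injective (congrArg Subtype.val h :))
  refine ⟨Z, hZ, LayeredTreewidthLE.of_isClique_neighborSet (hltw.comap f hf)
    (fun a ha u => hnew a ha u) fun a ha u hu v hv huv => ?_⟩
  exact hclique a ha hu hv (Subtype.val_injective.ne huv)

/-- If `G` is obtained from a graph `G' ∈ F_p^{+p}` (layered tree-width at most
`p` after deleting at most `p` vertices) by adding new vertices whose
neighborhoods are contained in cliques of `G'`, then `G ∈ F_{p+1}^{+p}`. -/
theorem stmt13 {U : Type} (p : ℕ) (hp : 0 < p) (G : SimpleGraph U) (O : Set U)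
    (hold : ∃ Z ⊆ O, Z.encard ≤ (p : ℕ∞) ∧
      LayeredTreewidthLE (O \ Z : Set U) (G.induce (O \ Z)) p)
    (hnew : ∀ a, a ∉ O → ∀ u, G.Adj a u → u ∈ O)
    (hclique : ∀ a, a ∉ O → G.IsClique (G.neighborSet a)) :
    ∃ Z' : Set U, Z'.encard ≤ (p : ℕ∞) ∧
      LayeredTreewidthLE (Z'ᶜ : Set U) (G.induce Z'ᶜ) (p + 1) :=
  stmt13_general p G O hold hnew hclique
end

section
/- Let F be a class of graphs and n a nonnegative integer. Then asdim(F^{+n}) = asdim(F), where asdim denotes the asymptotic dimension of a graph class defined via common control functions. In particular asdim(F^{+n}) ≤ asdim(F) and, since F ⊆ F^{+n}, asdim(F) ≤ asdim(F^{+n}). -/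
open SimpleGraph

/-- `F` is `(m)`-colorable with uniformly bounded weak diameter on all powers:
the witness of `asdim(F) ≤ m − 1`. -/
def ClassWD (F : {V : Type} → SimpleGraph V → Prop) (m : ℕ) : Prop :=
  ∃ f : ℕ → ℕ, ∀ {V : Type} (G : SimpleGraph V), F G → ∀ ℓ : ℕ, 0 < ℓ →
    ∃ c : V → Fin m, ∀ u v, MonoReach (G.pow ℓ) c u v →
      (G.pow ℓ).edist u v ≤ ((f ℓ : ℕ) : ℕ∞)

/-- The asymptotic dimension of a class of graphs. -/
noncomputable def asdimClass (F : {V : Type} → SimpleGraph V → Prop) : ℕ∞ :=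
  sInf {n : ℕ∞ | ∃ k : ℕ, n = k ∧ ClassWD F (k + 1)}

/-- `F^{+n}` : graphs that are in `F` after deleting at most `n` vertices. -/
def Fplus (F : {V : Type} → SimpleGraph V → Prop) (n : ℕ) :
    {V : Type} → SimpleGraph V → Prop :=
  fun {V} G => ∃ Z : Set V, Z.encard ≤ (n : ℕ∞) ∧ F (G.induce {v | v ∉ Z})

/-!
Colour the at most `n` deleted vertices `Z` arbitrarily. A monochromatic walk of `G^ℓ` that keeps
`G`-distance `> ℓ` from `Z` is a monochromatic walk of `(G - Z)^ℓ`, because a path of length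
`≤ ℓ` starting at such a vertex cannot meet `Z`. The apexes are then put back one at a time: a
walk entering the `ℓ`-ball of an apex `z` is short-cut through `z` between its first and last
visit of that ball, so each apex turns a weak-diameter bound `D` into `2 D + 4`.
The reverse inequality holds because `F ⊆ F^{+n}` for isomorphism-closed `F`.
-/

open Relation

namespace SimpleGraph

variable {V W : Type} {G : SimpleGraph V} {G' : SimpleGraph W}

theorem Hom.edist_le (f : G →g G') (u v : V) : G'.edist (f u) (f v) ≤ G.edist u v := by
  by_cases hr : G.Reachable u v
  · obtain ⟨p, hp⟩ := hr.exists_walk_length_eq_edist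
    rw [← hp, ← Walk.length_map f]
    exact SimpleGraph.edist_le _
  · exact edist_eq_top_of_not_reachable hr ▸ le_top

def Embedding.pow (f : G ↪g G') (ℓ : ℕ) : G.pow ℓ →g G'.pow ℓ where
  toFun := f
  map_rel' := fun ⟨hne, hd⟩ => ⟨f.injective.ne hne, (f.toHom.edist_le _ _).trans hd⟩

theorem pow_edist_le_one_iff {ℓ : ℕ} {u v : V} : (G.pow ℓ).edist u v ≤ 1 ↔ G.edist u v ≤ ℓ := by
  rw [edist_le_one_iff_adj_or_eq]
  by_cases h : u = v
  · simp [h]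
  · simp [h, SimpleGraph.pow]

theorem ballSet_pow_one (Z : Set V) (ℓ : ℕ) : ballSet (G.pow ℓ) Z 1 = ballSet G Z ℓ := by
  ext v
  simp only [ballSet, Set.mem_ofPred_eq, Nat.cast_one, pow_edist_le_one_iff]

end SimpleGraph

namespace Relation

variable {V : Type} {r : V → V → Prop} {Q : Set V} {u v : V}

def avoiding (r : V → V → Prop) (Q : Set V) : V → V → Prop := fun a b => r a b ∧ a ∉ Q ∧ b ∉ Q

instance [Std.Symm r] : Std.Symm (avoiding r Q) :=
  ⟨fun _ _ ⟨h, ha, hb⟩ => ⟨Std.Symm.symm _ _ h, hb, ha⟩⟩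

theorem ReflTransGen.avoiding_or_exists_entry (h : ReflTransGen r u v) :
    ReflTransGen (avoiding r Q) u v ∨
      ∃ a ∈ Q, ∃ a', ReflTransGen (avoiding r Q) u a' ∧ ReflGen r a' a := by
  induction h using ReflTransGen.head_induction_on with
  | refl => exact .inl .refl
  | @head u b hub _ ih =>
    by_cases hu : u ∈ Q
    · exact .inr ⟨u, hu, u, .refl, .refl⟩
    by_cases hb : b ∈ Q
    · exact .inr ⟨b, hb, u, .refl, .single hub⟩
    have hstep : avoiding r Q u b := ⟨hub, hu, hb⟩
    rcases ih with ih | ⟨a, ha, a', hba', ha'a⟩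
    · exact .inl (ih.head hstep)
    · exact .inr ⟨a, ha, a', hba'.head hstep, ha'a⟩

end Relation

def detourBound (D : ℕ) : ℕ → ℕ
  | 0 => D
  | k + 1 => 2 * detourBound D k + 4

theorem detourBound_le_succ (D k : ℕ) : detourBound D k ≤ detourBound D (k + 1) := by
  simp only [detourBound]
  omega

namespace SimpleGraph

variable {V : Type} (H : SimpleGraph V)

def WeakDiamLE (r : V → V → Prop) (D : ℕ∞) : Prop :=
  ∀ u v, ReflTransGen r u v → H.edist u v ≤ D

variable {H} {r : V → V → Prop}

theorem WeakDiamLE.mono {r' : V → V → Prop} {D D' : ℕ∞} (h : H.WeakDiamLE r' D)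
    (hr : r ≤ r') (hD : D ≤ D') : H.WeakDiamLE r D' :=
  fun u v huv => (h u v (ReflTransGen.mono hr _ _ huv)).trans hD

theorem edist_le_of_reflGen (hr : r ≤ H.Adj) {a b : V} (h : ReflGen r a b) :
    H.edist a b ≤ 1 := by
  cases h with
  | refl => simp [edist_self]
  | single h => exact (edist_eq_one_iff_adj.mpr (hr _ _ h)).le

theorem edist_le_of_mem_ballSet_singleton {z a : V} (ha : a ∈ ballSet H {z} 1) :
    H.edist z a ≤ 1 := by
  obtain ⟨_, rfl, h⟩ := ha
  exact_mod_cast h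

theorem WeakDiamLE.of_avoiding_ballSet_singleton [Std.Symm r] (hr : r ≤ H.Adj)
    {z : V} {D : ℕ∞} (hD : H.WeakDiamLE (avoiding r (ballSet H {z} 1)) D) :
    H.WeakDiamLE r (2 * D + 4) := by
  intro u v huv
  have hD4 : D ≤ 2 * D + 4 := le_add_right (le_mul_of_one_le_left' one_le_two)
  rcases huv.avoiding_or_exists_entry with huv | ⟨a, ha, a', hua', ha'a⟩
  · exact (hD u v huv).trans hD4
  have hvu : ReflTransGen r v u := Std.Symm.symm _ _ huv
  rcases hvu.avoiding_or_exists_entry with hvu | ⟨b, hb, b', hvb', hb'b⟩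
  · exact (H.edist_comm ▸ hD v u hvu).trans hD4
  calc H.edist u v
      ≤ H.edist u a' + H.edist a' a + H.edist a z + H.edist z b + H.edist b b' + H.edist b' v := by
        refine (H.edist_triangle (v := b')).trans (add_le_add_left ?_ _)
        refine (H.edist_triangle (v := b)).trans (add_le_add_left ?_ _)
        refine (H.edist_triangle (v := z)).trans (add_le_add_left ?_ _)
        exact (H.edist_triangle (v := a)).trans (add_le_add_left H.edist_triangle _)
    _ ≤ D + 1 + 1 + 1 + 1 + D := by
        gcongr
        · exact hD u a' hua'
        · exact edist_le_of_reflGen hr ha'a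
        · exact H.edist_comm ▸ edist_le_of_mem_ballSet_singleton ha
        · exact edist_le_of_mem_ballSet_singleton hb
        · exact H.edist_comm ▸ edist_le_of_reflGen hr hb'b
        · exact H.edist_comm ▸ hD v b' hvb'
    _ = 2 * D + 4 := by ring

theorem WeakDiamLE.of_avoiding_ballSet [Std.Symm r] (hr : r ≤ H.Adj) {Z : Set V} {k D : ℕ}
    (hZ : Z.encard ≤ k) (hD : H.WeakDiamLE (avoiding r (ballSet H Z 1)) D) :
    H.WeakDiamLE r (detourBound D k) := by
  induction k generalizing r Z with
  | zero =>
    obtain rfl : Z = ∅ := Set.encard_eq_zero.mp (nonpos_iff_eq_zero.mp (by exact_mod_cast hZ))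
    exact hD.mono (fun a b h => ⟨h, fun ⟨_, hs, _⟩ => hs, fun ⟨_, hs, _⟩ => hs⟩) le_rfl
  | succ k ih =>
    rcases Z.eq_empty_or_nonempty with rfl | ⟨z, hz⟩
    · exact (ih hr (by simp) hD).mono le_rfl (by exact_mod_cast detourBound_le_succ D k)
    have hZ' : (Z \ {z}).encard ≤ k := by
      rw [← Set.encard_sdiff_singleton_add_one hz, Nat.cast_succ] at hZ
      exact (ENat.add_le_add_iff_right ENat.one_ne_top).mp hZ
    have hball : ballSet H Z 1 ⊆ ballSet H {z} 1 ∪ ballSet H (Z \ {z}) 1 := by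
      rintro x ⟨s, hs, hsx⟩
      by_cases h : s = z
      · exact .inl ⟨s, h, hsx⟩
      · exact .inr ⟨s, ⟨hs, h⟩, hsx⟩
    have hD' : H.WeakDiamLE (avoiding (avoiding r (ballSet H {z} 1)) (ballSet H (Z \ {z}) 1)) D :=
      hD.mono (fun a b ⟨⟨h, ha, hb⟩, ha', hb'⟩ =>
        ⟨h, fun h' => (hball h').elim ha ha', fun h' => (hball h').elim hb hb'⟩) le_rfl
    push_cast [detourBound]
    exact (ih (fun a b h => hr a b h.1) hZ' hD').of_avoiding_ballSet_singleton hr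

variable {α : Type}

def monoAdj (H : SimpleGraph V) (c : V → α) : V → V → Prop := fun a b => H.Adj a b ∧ c a = c b

instance (H : SimpleGraph V) (c : V → α) : Std.Symm (H.monoAdj c) :=
  ⟨fun _ _ ⟨h, hc⟩ => ⟨h.symm, hc.symm⟩⟩

theorem monoAdj_le (H : SimpleGraph V) (c : V → α) : H.monoAdj c ≤ H.Adj := fun _ _ h => h.1

variable {G : SimpleGraph V} {Z : Set V} {ℓ : ℕ}

theorem notMem_of_notMem_ballSet {a : V} (ha : a ∉ ballSet G Z ℓ) : a ∉ Z :=
  fun haZ => ha ⟨a, haZ, by simp [edist_self]⟩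

theorem induce_pow_adj_of_notMem_ballSet {a b : V} (ha : a ∉ ballSet G Z ℓ) (hb : b ∉ Z)
    (hab : (G.pow ℓ).Adj a b) :
    ((G.induce {v | v ∉ Z}).pow ℓ).Adj ⟨a, notMem_of_notMem_ballSet ha⟩ ⟨b, hb⟩ := by
  obtain ⟨hne, hd⟩ := hab
  obtain ⟨p, hp⟩ := exists_walk_of_edist_ne_top (hd.trans_lt (ENat.natCast_lt_top ℓ)).ne
  have hsupp : ∀ x ∈ p.support, x ∈ {v | v ∉ Z} := by
    classical
    intro x hx hxZ
    refine ha ⟨x, hxZ, ?_⟩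
    calc G.edist x a = G.edist a x := edist_comm
      _ ≤ (p.takeUntil x hx).length := edist_le _
      _ ≤ p.length := by exact_mod_cast p.length_takeUntil_le_length hx
      _ ≤ ℓ := hp ▸ hd
  refine ⟨fun h => hne (congrArg Subtype.val h), ?_⟩
  calc _ ≤ ((p.induce _ hsupp).length : ℕ∞) := edist_le _
    _ = p.length := by rw [← Walk.length_map (Embedding.induce _).toHom, Walk.map_induce]; rfl
    _ ≤ ℓ := hp ▸ hd

variable {c : V → α} {c' : {v | v ∉ Z} → α}

theorem monoReach_induce_of_avoiding (hc : ∀ v (hv : v ∉ Z), c v = c' ⟨v, hv⟩) {u v : V}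
    (huv : ReflTransGen (avoiding ((G.pow ℓ).monoAdj c) (ballSet G Z ℓ)) u v) (hu : u ∉ Z) :
    ∃ hv : v ∉ Z, MonoReach ((G.induce {v | v ∉ Z}).pow ℓ) c' ⟨u, hu⟩ ⟨v, hv⟩ := by
  induction huv with
  | refl => exact ⟨hu, .refl⟩
  | @tail a b _ hab ih =>
    obtain ⟨⟨hadj, hcol⟩, ha, hb⟩ := hab
    obtain ⟨_, hua⟩ := ih
    have hbZ := notMem_of_notMem_ballSet hb
    refine ⟨hbZ, hua.tail ⟨induce_pow_adj_of_notMem_ballSet ha hbZ hadj, ?_⟩⟩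
    rw [← hc a, ← hc b]
    exact hcol

theorem weakDiamLE_avoiding_of_induce (hc : ∀ v (hv : v ∉ Z), c v = c' ⟨v, hv⟩) {D : ℕ∞}
    (hD : ((G.induce {v | v ∉ Z}).pow ℓ).WeakDiamLE
      (((G.induce {v | v ∉ Z}).pow ℓ).monoAdj c') D) :
    (G.pow ℓ).WeakDiamLE (avoiding ((G.pow ℓ).monoAdj c) (ballSet G Z ℓ)) D := by
  intro u v huv
  rcases huv.cases_head with rfl | ⟨_, ⟨_, hu, _⟩, _⟩
  · simp [edist_self]
  obtain ⟨hv, huv'⟩ := monoReach_induce_of_avoiding hc huv (notMem_of_notMem_ballSet hu)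
  exact (((Embedding.induce _).pow ℓ).edist_le _ _).trans (hD _ _ huv')

theorem weakDiamLE_pow_of_induce {n D : ℕ} (hZ : Z.encard ≤ n)
    (hc : ∀ v (hv : v ∉ Z), c v = c' ⟨v, hv⟩)
    (hD : ((G.induce {v | v ∉ Z}).pow ℓ).WeakDiamLE
      (((G.induce {v | v ∉ Z}).pow ℓ).monoAdj c') D) :
    (G.pow ℓ).WeakDiamLE ((G.pow ℓ).monoAdj c) (detourBound D n) :=
  WeakDiamLE.of_avoiding_ballSet (monoAdj_le _ c) hZ
    (ballSet_pow_one Z ℓ ▸ weakDiamLE_avoiding_of_induce hc hD)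

end SimpleGraph

theorem ClassWD.fplus {F : {V : Type} → SimpleGraph V → Prop} {k : ℕ} (n : ℕ)
    (h : ClassWD F (k + 1)) : ClassWD (Fplus F n) (k + 1) := by
  classical
  obtain ⟨f, hf⟩ := h
  refine ⟨fun ℓ => detourBound (f ℓ) n, fun G ⟨Z, hZ, hGZ⟩ ℓ hℓ => ?_⟩
  obtain ⟨c', hc'⟩ := hf _ hGZ ℓ hℓ
  exact ⟨fun v => if hv : v ∈ Z then 0 else c' ⟨v, hv⟩,
    weakDiamLE_pow_of_induce hZ (fun _ hv => dif_neg hv) hc'⟩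

theorem ClassWD.of_fplus {F : {V : Type} → SimpleGraph V → Prop}
    (hiso : ∀ {V W : Type} (G : SimpleGraph V) (H : SimpleGraph W), G ≃g H → F G → F H)
    {n m : ℕ} (h : ClassWD (Fplus F n) m) : ClassWD F m := by
  obtain ⟨f, hf⟩ := h
  refine ⟨f, fun {V} G hG => hf G ⟨∅, by simp, ?_⟩⟩
  have hcompl : {v : V | v ∉ (∅ : Set V)} = Set.univ := Set.eq_univ_of_forall fun v => id
  exact hcompl ▸ hiso G _ G.induceUnivIso.symm hG

/-- Adding at most `n` apex vertices does not change the asymptotic dimension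
of an (isomorphism-closed) class of graphs. -/
theorem stmt19 (F : {V : Type} → SimpleGraph V → Prop)
    (hiso : ∀ {V W : Type} (G : SimpleGraph V) (H : SimpleGraph W),
      G ≃g H → F G → F H)
    (n : ℕ) :
    asdimClass (Fplus F n) = asdimClass F := by
  have key (k : ℕ) : ClassWD (Fplus F n) (k + 1) ↔ ClassWD F (k + 1) :=
    ⟨ClassWD.of_fplus hiso, ClassWD.fplus n⟩
  simp only [asdimClass, key]
end
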